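/- Gauge transformation of the Pauli fidelities of a uniform stochastic instrument: let n, m ∈ ℕ, N := m + n, let p : Z2^n × Z2^n × V_m → ℝ with Pauli fidelities λ(x,y,Q) := Σ_{a,b,P} (-1)^{a·x + b·y + ⟨P,Q⟩} p(a,b,P), and let U_k(ρ) := Σ_{a,b,P} p(a,b,P) · (W(P) ⊗ E_{k+b,k+a}) ρ (W(P) ⊗ E_{k+b,k+a})†. Let η > 0 and ε : (Fin N → ZMod 2) → ℝ, and define the linear maps D(A) := 2^{-N} Σ_{v ∈ V_N} η^{ε(pt(v))} Tr(W(v) A) W(v) and D'(A) := 2^{-N} Σ_{v ∈ V_N} η^{-ε(pt(v))} Tr(W(v) A) W(v) on (m+n)-qubit matrices. Then for every k ∈ Z2^n and every matrix ρ: D(U_k(D'(ρ))) = 2^{-(2n+m)} Σ_{x,y ∈ Z2^n, Q ∈ V_m} (-1)^{k·(x+y)} · λ(x,y,Q) · η^{ε(pt(Q⊞y)) − ε(pt(Q⊞x))} · Tr((W(Q) ⊗ Z^x) ρ) · (W(Q) ⊗ Z^y); that is, the conjugated instrument is again a uniform stochastic instrument whose Pauli fidelities are λ(x,y,Q) ·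 η^{ε(pt(Q⊞y)) − ε(pt(Q⊞x))}. -/

import Mathlib

open Finset Matrix Kronecker

/-- `m`-qubit Pauli operators modulo phase, as pairs of X- and Z-exponents per qubit. -/
abbrev V (m : ℕ) := Fin m → ZMod 2 × ZMod 2

/-- Symplectic inner product recording (non-)commutation of Pauli operators. -/
def sympl {m : ℕ} (P Q : V m) : ZMod 2 :=
  ∑ i, ((P i).1 * (Q i).2 + (P i).2 * (Q i).1)

/-- Dot product on `Z2^n`. -/
def dot {n : ℕ} (x y : Fin n → ZMod 2) : ZMod 2 := ∑ i, x i * y i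

/-- The real sign `(-1)^z` associated with `z : ZMod 2`. -/
def sgn (z : ZMod 2) : ℝ := (-1 : ℝ) ^ z.val

/-- The Hermitian Pauli matrix labeled by `v : V n`. -/
noncomputable def W {n : ℕ} (v : V n) :
    Matrix (Fin n → ZMod 2) (Fin n → ZMod 2) ℂ := fun j k =>
  Complex.I ^ (Finset.univ.filter (fun i => (v i).1 = 1 ∧ (v i).2 = 1)).card *
    (-1 : ℂ) ^ (∑ i, (v i).2 * k i : ZMod 2).val *
    (if j = (fun i => k i + (v i).1) then 1 else 0)

/-- `Z^x`: the purely-Z Pauli matrix with Z-exponents `x`. -/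
noncomputable def Zpow {n : ℕ} (x : Fin n → ZMod 2) :
    Matrix (Fin n → ZMod 2) (Fin n → ZMod 2) ℂ :=
  W (fun i => ((0 : ZMod 2), x i))

/-- Matrices on the `(m+n)`-qubit space. -/
abbrev MatP (m n : ℕ) :=
  Matrix ((Fin m → ZMod 2) × (Fin n → ZMod 2)) ((Fin m → ZMod 2) × (Fin n → ZMod 2)) ℂ

/-- The uniform stochastic instrument with Pauli error rates `p`:
`U_k(ρ) = Σ_{a,b,P} p(a,b,P) (W(P) ⊗ E_{k+b,k+a}) ρ (W(P) ⊗ E_{k+b,k+a})†`. -/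
noncomputable def instU (n m : ℕ)
    (p : (Fin n → ZMod 2) × (Fin n → ZMod 2) × V m → ℝ)
    (k : Fin n → ZMod 2) (ρ : MatP m n) : MatP m n :=
  ∑ a : Fin n → ZMod 2, ∑ b : Fin n → ZMod 2, ∑ P : V m,
    (p (a, b, P) : ℂ) •
      ((W P ⊗ₖ Matrix.single (k + b) (k + a) (1 : ℂ)) * ρ *
        (W P ⊗ₖ Matrix.single (k + b) (k + a) (1 : ℂ))ᴴ)


/-- Pauli weight pattern: `1` on qubits where the Pauli label is non-identity. -/
def pt {N : ℕ} (v : V N) : Fin N → ZMod 2 :=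
  fun i => if v i = (0, 0) then 0 else 1

/-- `Q⊞x`: the `(m+n)`-qubit Pauli label of `Q ⊗ Z^x`. -/
def emb {m n : ℕ} (Q : V m) (x : Fin n → ZMod 2) : V (m + n) :=
  Fin.append Q (fun i => ((0 : ZMod 2), x i))

/-- The `(m+n)`-qubit Hermitian Pauli matrix labeled by `v : V (m+n)`, realized on
the product index set via the Kronecker factorization `W(v) = W(v|_m) ⊗ W(v|_n)`. -/
noncomputable def WN (m n : ℕ) (v : V (m + n)) : MatP m n :=
  W (fun i => v (Fin.castAdd n i)) ⊗ₖ W (fun i => v (Fin.natAdd m i))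

/-- The pattern-diagonal gauge map
`D(A) := 2^{-(m+n)} Σ_v η^{ε(pt v)} Tr(W(v) A) W(v)`. -/
noncomputable def Dmap (m n : ℕ) (η : ℝ) (ε : (Fin (m + n) → ZMod 2) → ℝ)
    (A : MatP m n) : MatP m n :=
  ((2 : ℂ) ^ (m + n))⁻¹ •
    ∑ v : V (m + n), ((η ^ ε (pt v) : ℝ) : ℂ) • ((WN m n v * A).trace • WN m n v)

/-!
Both gauge maps are diagonal in the Pauli basis, with eigenvalue `η ^ (±ε (pt v))` on `W v`.
Expand `D'(ρ)` in that basis. Conjugating `W Q ⊗ W R` by `W P ⊗ E_{k+b,k+a}` gives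
`(-1)^⟨P,Q⟩ · W(R)_{k+a,k+a} · (W Q ⊗ E_{k+b,k+b})`, and the diagonal entry vanishes
unless `R` is a Z-string `Z^x`, where it is `(-1)^{x·(k+a)}`. Applying `D` to `W Q ⊗ E_{jj}`
re-expands the projector as `2^{-n} Σ_y (-1)^{y·j} Z^y`, weighted by `η ^ ε (pt (Q⊞y))`.
Summing the signs against `p(a,b,P)` then gives `(-1)^{k·(x+y)} λ(x,y,Q)`.
-/

lemma sgn_add (a b : ZMod 2) : sgn (a + b) = sgn a * sgn b := by
  rw [sgn, sgn, sgn, ZMod.val_add, ← neg_one_pow_eq_pow_mod_two, pow_add]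

lemma sgn_natCast (s : ℕ) : sgn s = (-1) ^ s := by
  rw [sgn, ZMod.val_natCast, ← neg_one_pow_eq_pow_mod_two]

lemma sgn_one : sgn 1 = -1 := by simp [sgn, ZMod.val_one]

lemma sgn_mul_self (a : ZMod 2) : sgn a * sgn a = 1 := by
  rw [← sgn_add, ZModModule.add_self, sgn, ZMod.val_zero, pow_zero]

lemma sum_sgn_dotProduct {n : ℕ} (w : Fin n → ZMod 2) :
    ∑ k, sgn (w ⬝ᵥ k) = if w = 0 then 2 ^ n else 0 := by
  by_cases hw : w = 0
  · simp [hw, sgn]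
  obtain ⟨i, hi⟩ := Function.ne_iff.mp hw
  have hwi : w i = 1 := by
    have key : ∀ a : ZMod 2, a ≠ 0 → a = 1 := by decide
    exact key _ hi
  have hflip : ∀ k, sgn (w ⬝ᵥ (k + Pi.single i 1)) = -sgn (w ⬝ᵥ k) := by
    intro k
    rw [dotProduct_add, dotProduct_single, hwi, mul_one, sgn_add, sgn_one]
    ring
  have hsum :=
    Equiv.sum_comp (Equiv.addRight (Pi.single i 1 : Fin n → ZMod 2)) fun k => sgn (w ⬝ᵥ k)
  simp only [Equiv.coe_addRight, hflip, Finset.sum_neg_distrib] at hsum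
  rw [if_neg hw]
  linarith

section Pauli
variable {n : ℕ}

def xPart (v : V n) : Fin n → ZMod 2 := fun i => (v i).1
def zPart (v : V n) : Fin n → ZMod 2 := fun i => (v i).2
def numY (v : V n) : ℕ := #{i | (v i).1 = 1 ∧ (v i).2 = 1}

@[simp] lemma xPart_zero : xPart (0 : V n) = 0 := rfl
@[simp] lemma zPart_zero : zPart (0 : V n) = 0 := rfl
lemma xPart_add (u v : V n) : xPart (u + v) = xPart u + xPart v := rfl
lemma zPart_add (u v : V n) : zPart (u + v) = zPart u + zPart v := rfl

lemma zPart_dotProduct_xPart (v : V n) : zPart v ⬝ᵥ xPart v = numY v := by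
  have key : ∀ a b : ZMod 2, b * a = if a = 1 ∧ b = 1 then 1 else 0 := by decide
  simp only [dotProduct, zPart, xPart, key, Finset.sum_boole, numY]

lemma W_apply (v : V n) (j k : Fin n → ZMod 2) :
    W v j k = Complex.I ^ numY v * sgn (zPart v ⬝ᵥ k) * if j = k + xPart v then 1 else 0 := by
  push_cast [sgn]
  rfl

lemma W_mul_W (u v : V n) :
    W u * W v = (Complex.I ^ numY u * Complex.I ^ numY v * sgn (zPart u ⬝ᵥ xPart v) /
      Complex.I ^ numY (u + v)) • W (u + v) := by
  ext j k
  have hI : Complex.I ^ numY (u + v) ≠ 0 := pow_ne_zero _ Complex.I_ne_zero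
  rw [mul_apply, Finset.sum_eq_single (k + xPart v), Matrix.smul_apply, W_apply, W_apply, W_apply,
    if_pos rfl]
  · rw [xPart_add, zPart_add, add_assoc, add_comm (xPart v), dotProduct_add, add_dotProduct,
      sgn_add, sgn_add, smul_eq_mul, div_mul_eq_mul_div, eq_div_iff hI]
    push_cast
    ring
  · intro l _ hl
    rw [W_apply v, if_neg hl, mul_zero, mul_zero]
  · simp

lemma eq_zero_iff_xPart_zPart (v : V n) : v = 0 ↔ xPart v = 0 ∧ zPart v = 0 := by
  refine ⟨by rintro rfl; exact ⟨rfl, rfl⟩, fun ⟨hx, hz⟩ => ?_⟩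
  funext i
  exact Prod.ext (congrFun hx i) (congrFun hz i)

lemma numY_eq_zero {v : V n} (hx : xPart v = 0) : numY v = 0 := by
  rw [numY, Finset.card_eq_zero, Finset.filter_eq_empty_iff]
  intro i _ hi
  have : (v i).1 = 0 := congrFun hx i
  simp [this] at hi

lemma W_zero : W (0 : V n) = 1 := by
  ext j k
  simp [W_apply, numY_eq_zero xPart_zero, sgn, one_apply]

lemma W_mul_self (v : V n) : W v * W v = 1 := by
  rw [W_mul_W, ZModModule.add_self, W_zero, numY_eq_zero xPart_zero, zPart_dotProduct_xPart,
    sgn_natCast]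
  push_cast
  rw [pow_zero, div_one, ← mul_pow, ← mul_pow, Complex.I_mul_I, neg_one_mul, neg_neg, one_pow,
    one_smul]

lemma sympl_eq (P Q : V n) : sympl P Q = xPart P ⬝ᵥ zPart Q + zPart P ⬝ᵥ xPart Q := by
  simp only [sympl, dotProduct, xPart, zPart, Finset.sum_add_distrib]

lemma W_comm (P Q : V n) : W P * W Q = (sgn (sympl P Q) : ℂ) • (W Q * W P) := by
  rw [W_mul_W, W_mul_W, smul_smul, add_comm Q P, sympl_eq, sgn_add, dotProduct_comm (xPart P)]
  congr 1
  have h := congrArg (fun r : ℝ => (r : ℂ)) (sgn_mul_self (zPart Q ⬝ᵥ xPart P))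
  push_cast at h ⊢
  linear_combination (-(Complex.I ^ numY P * Complex.I ^ numY Q *
    sgn (zPart P ⬝ᵥ xPart Q) / Complex.I ^ numY (P + Q) : ℂ)) * h

lemma W_conjTranspose (v : V n) : (W v)ᴴ = W v := by
  ext j k
  have hjk : k = j + xPart v ↔ j = k + xPart v := by
    constructor <;> rintro rfl <;> rw [add_assoc, ZModModule.add_self, add_zero]
  rw [conjTranspose_apply, W_apply, W_apply]
  by_cases h : j = k + xPart v
  · rw [if_pos h, if_pos (hjk.mpr h), h, dotProduct_add, zPart_dotProduct_xPart, sgn_add,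
      sgn_natCast]
    simp only [star_mul', star_pow, Complex.star_def, Complex.conj_I, Complex.conj_ofReal,
      mul_one]
    push_cast
    have hsq : ((-1 : ℂ) ^ numY v) * (-1) ^ numY v = 1 := by rw [← mul_pow]; norm_num
    rw [neg_pow Complex.I]
    linear_combination (Complex.I ^ numY v * sgn (zPart v ⬝ᵥ k)) * hsq
  · rw [if_neg h, if_neg (mt hjk.mp h)]
    simp

lemma W_apply_self (v : V n) (k : Fin n → ZMod 2) :
    W v k k = if xPart v = 0 then (sgn (zPart v ⬝ᵥ k) : ℂ) else 0 := by
  rw [W_apply]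
  by_cases hx : xPart v = 0
  · rw [if_pos hx, hx, add_zero, if_pos rfl, numY_eq_zero hx]
    ring
  · rw [if_neg hx, if_neg (by simpa using hx), mul_zero]

lemma trace_W (v : V n) : (W v).trace = if v = 0 then 2 ^ n else 0 := by
  simp only [trace, diag_apply, W_apply_self]
  by_cases hx : xPart v = 0
  · simp only [eq_zero_iff_xPart_zPart, hx, if_true, true_and]
    rw [← Complex.ofReal_sum, sum_sgn_dotProduct]
    split_ifs <;> simp
  · simp [eq_zero_iff_xPart_zPart, hx]

lemma trace_W_mul_W (u v : V n) : (W u * W v).trace = if u = v then 2 ^ n else 0 := by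
  by_cases h : u = v
  · simp [h, W_mul_self]
  · have huv : u + v ≠ 0 := by
      rwa [← ZModModule.sub_eq_add, sub_ne_zero]
    rw [W_mul_W, trace_smul, trace_W, if_neg huv, if_neg h, smul_zero]

def zLabel (z : Fin n → ZMod 2) : V n := fun i => (0, z i)

lemma Zpow_eq_W_zLabel (z : Fin n → ZMod 2) : Zpow z = W (zLabel z) := rfl

lemma W_zLabel_apply_self (z k : Fin n → ZMod 2) : W (zLabel z) k k = sgn (z ⬝ᵥ k) :=
  (W_apply_self _ _).trans (if_pos rfl)

lemma sum_eq_sum_zLabel {M : Type*} [AddCommMonoid M] (f : V n → M)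
    (hf : ∀ v, xPart v ≠ 0 → f v = 0) : ∑ v, f v = ∑ z, f (zLabel z) := by
  rw [← (Equiv.arrowProdEquivProdArrow _ _ _).symm.sum_comp, Fintype.sum_prod_type,
    Finset.sum_eq_single 0]
  · rfl
  · exact fun x _ hx => Finset.sum_eq_zero fun z _ => hf _ hx
  · simp

lemma dot_eq_dotProduct (x y : Fin n → ZMod 2) : dot x y = x ⬝ᵥ y := rfl

lemma sgn_dotProduct_add_mul_sgn_dotProduct_add (x y k a b : Fin n → ZMod 2) :
    sgn (x ⬝ᵥ (k + a)) * sgn (y ⬝ᵥ (k + b))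
      = sgn (k ⬝ᵥ (x + y)) * sgn (dot a x + dot b y) := by
  simp only [dot_eq_dotProduct, dotProduct_add, add_dotProduct, sgn_add, dotProduct_comm k,
    dotProduct_comm a, dotProduct_comm b]
  ring

end Pauli

section Instrument
variable {m n : ℕ}

lemma conj_W_kronecker_W (P Q : V m) (R : V n) (a b : Fin n → ZMod 2) :
    (W P ⊗ₖ single b a (1 : ℂ)) * (W Q ⊗ₖ W R) * (W P ⊗ₖ single b a (1 : ℂ))ᴴ
      = ((sgn (sympl P Q) : ℂ) * W R a a) • (W Q ⊗ₖ single b b 1) := by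
  rw [conjTranspose_kronecker, W_conjTranspose, conjTranspose_single, star_one,
    ← mul_kronecker_mul, ← mul_kronecker_mul, W_comm, smul_mul, mul_assoc, W_mul_self, mul_one,
    single_mul_mul_single, one_mul, mul_one, ← mul_one (W R a a), ← smul_eq_mul,
    ← smul_single, smul_kronecker, kronecker_smul, smul_smul, smul_eq_mul, mul_one]

lemma emb_eq_append_zLabel (Q : V m) (z : Fin n → ZMod 2) :
    emb Q z = Fin.append Q (zLabel z) := rfl

lemma WN_append (Q : V m) (R : V n) : WN m n (Fin.append Q R) = W Q ⊗ₖ W R := by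
  simp [WN]

variable (η : ℝ) (ε : (Fin (m + n) → ZMod 2) → ℝ)
  (p : (Fin n → ZMod 2) × (Fin n → ZMod 2) × V m → ℝ) (k : Fin n → ZMod 2)

@[simps]
noncomputable def Dmapₗ : MatP m n →ₗ[ℂ] MatP m n where
  toFun := Dmap m n η ε
  map_add' A B := by
    simp only [Dmap, Matrix.mul_add, trace_add, add_smul, smul_add, Finset.sum_add_distrib]
  map_smul' c A := by
    simp only [Dmap, Matrix.mul_smul, trace_smul, Finset.smul_sum, RingHom.id_apply]
    exact Finset.sum_congr rfl fun v _ => by module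

@[simps]
noncomputable def instUₗ : MatP m n →ₗ[ℂ] MatP m n where
  toFun := instU n m p k
  map_add' A B := by
    simp only [instU, Matrix.mul_add, Matrix.add_mul, smul_add, Finset.sum_add_distrib]
  map_smul' c A := by
    simp only [instU, Matrix.mul_smul, Matrix.smul_mul, Finset.smul_sum, RingHom.id_apply,
      smul_comm c]

lemma Dmap_eq_sum_kronecker (A : MatP m n) :
    Dmap m n η ε A = ((2 : ℂ) ^ (m + n))⁻¹ • ∑ Q : V m, ∑ R : V n,
      (((η ^ ε (pt (Fin.append Q R)) : ℝ) : ℂ) * ((W Q ⊗ₖ W R) * A).trace) •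
        (W Q ⊗ₖ W R) := by
  rw [Dmap, ← (Fin.appendEquiv m n).sum_comp, Fintype.sum_prod_type]
  simp only [Fin.appendEquiv, Equiv.coe_fn_mk, WN_append, smul_smul]

lemma Dmap_W_kronecker_single (Q : V m) (j : Fin n → ZMod 2) :
    Dmap m n η ε (W Q ⊗ₖ single j j 1) = ((2 : ℂ) ^ n)⁻¹ • ∑ y : Fin n → ZMod 2,
      (((η ^ ε (pt (emb Q y)) : ℝ) : ℂ) * sgn (y ⬝ᵥ j)) • (W Q ⊗ₖ Zpow y) := by
  rw [Dmap_eq_sum_kronecker]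
  simp only [← mul_kronecker_mul, trace_kronecker, trace_W_mul_W, trace_mul_single,
    MulOpposite.op_one, one_smul, ite_mul, zero_mul, mul_ite, mul_zero, ite_smul, zero_smul,
    Finset.sum_ite_irrel, Finset.sum_const_zero, Finset.sum_ite_eq', Finset.mem_univ, if_true]
  rw [sum_eq_sum_zLabel _ fun R hR => by rw [W_apply_self, if_neg hR]; simp]
  simp only [W_zLabel_apply_self, Finset.smul_sum, smul_smul]
  refine Finset.sum_congr rfl fun y _ => ?_
  congr 1
  rw [pow_add]
  field_simp
  exact mul_comm _ _

lemma instU_W_kronecker_W (Q : V m) (R : V n) :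
    instU n m p k (W Q ⊗ₖ W R) = ∑ a, ∑ b, ∑ P : V m,
      ((p (a, b, P) : ℂ) * (sgn (sympl P Q) * W R (k + a) (k + a))) •
        (W Q ⊗ₖ single (k + b) (k + b) 1) := by
  simp only [instU, conj_W_kronecker_W, smul_smul]

lemma instU_W_kronecker_W_eq_zero (Q : V m) {R : V n} (hR : xPart R ≠ 0) :
    instU n m p k (W Q ⊗ₖ W R) = 0 := by
  simp [instU_W_kronecker_W, W_apply_self, hR]

def pauliFidelity (x y : Fin n → ZMod 2) (Q : V m) : ℝ :=
  ∑ a, ∑ b, ∑ P, sgn (dot a x + dot b y + sympl P Q) * p (a, b, P)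

lemma Dmap_instU_W_kronecker_Zpow (Q : V m) (x : Fin n → ZMod 2) :
    Dmap m n η ε (instU n m p k (W Q ⊗ₖ Zpow x)) = ((2 : ℂ) ^ n)⁻¹ • ∑ y,
      ((sgn (k ⬝ᵥ (x + y)) * pauliFidelity p x y Q * η ^ ε (pt (emb Q y)) : ℝ) : ℂ) •
        (W Q ⊗ₖ Zpow y) := by
  rw [Zpow_eq_W_zLabel, instU_W_kronecker_W, ← Dmapₗ_apply]
  simp only [map_sum, map_smul, Dmapₗ_apply, Dmap_W_kronecker_single, W_zLabel_apply_self,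
    Finset.smul_sum, smul_smul]
  rw [Finset.sum_congr rfl fun a _ => Finset.sum_comm_cycle, Finset.sum_comm]
  refine Finset.sum_congr rfl fun y _ => ?_
  simp only [pauliFidelity, Finset.mul_sum, Finset.sum_mul, Complex.ofReal_sum, Finset.sum_smul]
  refine Finset.sum_congr rfl fun a _ => Finset.sum_congr rfl fun b _ =>
    Finset.sum_congr rfl fun P _ => ?_
  congr 1
  have h := congrArg (fun r : ℝ => (r : ℂ))
    (sgn_dotProduct_add_mul_sgn_dotProduct_add x y k a b)
  rw [sgn_add]
  push_cast at h ⊢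
  linear_combination
    ((2 : ℂ) ^ n)⁻¹ * p (a, b, P) * sgn (sympl P Q) * (η ^ ε (pt (emb Q y)) : ℝ) * h

end Instrument

/-- Gauge transformation of the Pauli fidelities of a uniform stochastic instrument:
conjugating `U_k` by the gauge maps `D, D'` yields again a uniform stochastic
instrument whose Pauli fidelities are `λ(x,y,Q) η^{ε(pt(Q⊞y)) − ε(pt(Q⊞x))}`. -/
theorem stmt_5 (n m : ℕ)
    (p : (Fin n → ZMod 2) × (Fin n → ZMod 2) × V m → ℝ)
    (lam : (Fin n → ZMod 2) → (Fin n → ZMod 2) → V m → ℝ)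
    (hlam : ∀ (x y : Fin n → ZMod 2) (Q : V m),
      lam x y Q = ∑ a : Fin n → ZMod 2, ∑ b : Fin n → ZMod 2, ∑ P : V m,
        sgn (dot a x + dot b y + sympl P Q) * p (a, b, P))
    (η : ℝ) (hη : 0 < η) (ε : (Fin (m + n) → ZMod 2) → ℝ)
    (k : Fin n → ZMod 2) (ρ : MatP m n) :
    Dmap m n η ε (instU n m p k (Dmap m n η (fun u => -ε u) ρ))
    = ((2 : ℂ) ^ (2 * n + m))⁻¹ •
        ∑ x : Fin n → ZMod 2, ∑ y : Fin n → ZMod 2, ∑ Q : V m,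
          ((sgn (dot k (x + y)) * lam x y Q *
              η ^ (ε (pt (emb Q y)) - ε (pt (emb Q x))) : ℝ) : ℂ) •
            (((W Q ⊗ₖ Zpow x) * ρ).trace • (W Q ⊗ₖ Zpow y)) := by
  obtain rfl : lam = pauliFidelity p := funext fun x => funext fun y => funext (hlam x y)
  rw [Dmap_eq_sum_kronecker η (fun u => -ε u) ρ, ← Dmapₗ_apply, ← instUₗ_apply]
  simp only [map_smul, map_sum, instUₗ_apply, Dmapₗ_apply]
  rw [Finset.sum_congr rfl fun Q _ => sum_eq_sum_zLabel _ fun R hR => by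
    rw [instU_W_kronecker_W_eq_zero p k Q hR, ← Dmapₗ_apply, map_zero, smul_zero]]
  simp only [← Zpow_eq_W_zLabel, ← emb_eq_append_zLabel, Dmap_instU_W_kronecker_Zpow,
    Finset.smul_sum, smul_smul]
  conv_rhs => rw [Finset.sum_comm_cycle]
  refine Finset.sum_congr rfl fun Q _ => Finset.sum_congr rfl fun x _ =>
    Finset.sum_congr rfl fun y _ => ?_
  congr 1
  rw [sub_eq_add_neg, Real.rpow_add hη, dot_eq_dotProduct]
  push_cast
  ring
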